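/- Uniqueness of the coexistence average: any two positive T-periodic solutions (ū,v̄) and (ũ,ṽ) of the two-species seasonal system with b₁b₂ ≠ 1 satisfy ∫₀^{τ₂-τ₁}ū₂ + ∫₀^{T-τ₂}ū₃ = ∫₀^{τ₂-τ₁}ũ₂ + ∫₀^{T-τ₂}ũ₃, both equal to [r((1-c₁)T + c₁τ₂ - (1+d₁)τ₁) - b₁((r-c₂)T + c₂τ₂ - (r+d₂)τ₁)] / (r(1-b₁b₂)), obtained by taking the r-weighted difference of the two logarithmic integral identities. -/

import Mathlib

/-!
Along a positive solution, `(log u)'` is the per-capita growth rate of `u`, which in every season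
is an affine function of `u` and `v`. Integrating over one period, periodicity kills the left-hand
side, so `∫ u` and `∫ v` over the growth and grazing seasons satisfy two linear equations whose
coefficients and right-hand sides depend only on the parameters. Their determinant is
`r (1 - b₁ b₂) ≠ 0`, so the `u`-integral is the same for every positive periodic solution.
-/

open Real Set MeasureTheory

lemma integral_eq_log_sub_log_of_hasDerivWithinAt {f g : ℝ → ℝ} {a b : ℝ} (hab : a ≤ b)
    (hpos : ∀ t ∈ Icc a b, 0 < f t)
    (hf : ∀ t ∈ Icc a b, HasDerivWithinAt f (f t * g t) (Icc a b) t)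
    (hg : IntervalIntegrable g volume a b) :
    ∫ t in a..b, g t = log (f b) - log (f a) := by
  have hlog_cont : ContinuousOn (fun t => log (f t)) (Icc a b) :=
    ContinuousOn.log (fun t ht => (hf t ht).continuousWithinAt) fun t ht => (hpos t ht).ne'
  refine intervalIntegral.integral_eq_sub_of_hasDeriv_right_of_le hab hlog_cont
    (fun t ht => ?_) hg
  have hne : f t ≠ 0 := (hpos t (Ioo_subset_Icc_self ht)).ne'
  have hderiv := ((hf t (Ioo_subset_Icc_self ht)).hasDerivAt (Icc_mem_nhds ht.1 ht.2)).log hne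
  rw [mul_div_cancel_left₀ _ hne] at hderiv
  exact hderiv.hasDerivWithinAt

lemma log_sub_log_eq_of_hasDerivWithinAt_affine {f x y : ℝ → ℝ} {a b α β γ : ℝ} (hab : a ≤ b)
    (hpos : ∀ t ∈ Icc a b, 0 < f t)
    (hx : IntervalIntegrable x volume a b) (hy : IntervalIntegrable y volume a b)
    (hf : ∀ t ∈ Icc a b,
      HasDerivWithinAt f (f t * (α - β * x t - γ * y t)) (Icc a b) t) :
    log (f b) - log (f a) = α * (b - a) - β * (∫ t in a..b, x t) - γ * ∫ t in a..b, y t := by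
  have hxy : IntervalIntegrable (fun t => α - β * x t) volume a b :=
    intervalIntegrable_const.sub (hx.const_mul β)
  rw [← integral_eq_log_sub_log_of_hasDerivWithinAt hab hpos hf (hxy.sub (hy.const_mul γ)),
    intervalIntegral.integral_sub hxy (hy.const_mul γ),
    intervalIntegral.integral_sub intervalIntegrable_const (hx.const_mul β),
    intervalIntegral.integral_const_mul, intervalIntegral.integral_const_mul,
    intervalIntegral.integral_const, smul_eq_mul, mul_comm α]

lemma season_integrals_eq_of_periodic {f x y : ℝ → ℝ} {τ₁ τ₂ T α₁ α₂ α₃ β γ : ℝ}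
    (h1 : 0 ≤ τ₁) (h2 : τ₁ ≤ τ₂) (h3 : τ₂ ≤ T)
    (hpos : ∀ t ∈ Icc 0 T, 0 < f t) (hper : f T = f 0)
    (hx₂ : IntervalIntegrable x volume τ₁ τ₂) (hx₃ : IntervalIntegrable x volume τ₂ T)
    (hy₂ : IntervalIntegrable y volume τ₁ τ₂) (hy₃ : IntervalIntegrable y volume τ₂ T)
    (hf₁ : ∀ t ∈ Icc 0 τ₁, HasDerivWithinAt f (α₁ * f t) (Icc 0 τ₁) t)
    (hf₂ : ∀ t ∈ Icc τ₁ τ₂,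
      HasDerivWithinAt f (f t * (α₂ - β * x t - γ * y t)) (Icc τ₁ τ₂) t)
    (hf₃ : ∀ t ∈ Icc τ₂ T,
      HasDerivWithinAt f (f t * (α₃ - β * x t - γ * y t)) (Icc τ₂ T) t) :
    β * ((∫ t in τ₁..τ₂, x t) + ∫ t in τ₂..T, x t)
      + γ * ((∫ t in τ₁..τ₂, y t) + ∫ t in τ₂..T, y t)
      = α₁ * τ₁ + α₂ * (τ₂ - τ₁) + α₃ * (T - τ₂) := by
  have season₁ : log (f τ₁) - log (f 0) = α₁ * τ₁ := by
    rw [← integral_eq_log_sub_log_of_hasDerivWithinAt h1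
      (fun t ht => hpos t (Icc_subset_Icc le_rfl (h2.trans h3) ht))
      (fun t ht => (hf₁ t ht).congr_deriv (mul_comm _ _)) intervalIntegrable_const]
    simp [mul_comm]
  have season₂ := log_sub_log_eq_of_hasDerivWithinAt_affine h2
    (fun t ht => hpos t (Icc_subset_Icc h1 h3 ht)) hx₂ hy₂ hf₂
  have season₃ := log_sub_log_eq_of_hasDerivWithinAt_affine h3
    (fun t ht => hpos t (Icc_subset_Icc (h1.trans h2) le_rfl ht)) hx₃ hy₃ hf₃
  rw [hper] at season₃
  linear_combination season₁ + season₂ + season₃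

section SeasonalLotkaVolterra

variable {d₁ d₂ r b₁ b₂ c₁ c₂ τ₁ τ₂ T : ℝ} {u v : ℝ → ℝ}

lemma integral_u_eq_of_periodic_solution (hr : 0 < r) (hbb : b₁ * b₂ ≠ 1)
    (h1 : 0 ≤ τ₁) (h2 : τ₁ ≤ τ₂) (h3 : τ₂ ≤ T)
    (hupos : ∀ t ∈ Icc (0:ℝ) T, 0 < u t) (hvpos : ∀ t ∈ Icc (0:ℝ) T, 0 < v t)
    (huper : u T = u 0) (hvper : v T = v 0)
    (hu1 : ∀ t ∈ Icc (0:ℝ) τ₁, HasDerivWithinAt u (-d₁ * u t) (Icc (0:ℝ) τ₁) t)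
    (hv1 : ∀ t ∈ Icc (0:ℝ) τ₁, HasDerivWithinAt v (-d₂ * v t) (Icc (0:ℝ) τ₁) t)
    (hu2 : ∀ t ∈ Icc τ₁ τ₂,
      HasDerivWithinAt u (u t * (1 - u t - b₁ * v t)) (Icc τ₁ τ₂) t)
    (hv2 : ∀ t ∈ Icc τ₁ τ₂,
      HasDerivWithinAt v (r * v t * (1 - v t - b₂ * u t)) (Icc τ₁ τ₂) t)
    (hu3 : ∀ t ∈ Icc τ₂ T,
      HasDerivWithinAt u (u t * (1 - u t - b₁ * v t) - c₁ * u t) (Icc τ₂ T) t)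
    (hv3 : ∀ t ∈ Icc τ₂ T,
      HasDerivWithinAt v (r * v t * (1 - v t - b₂ * u t) - c₂ * v t) (Icc τ₂ T) t) :
    (∫ t in (0:ℝ)..(τ₂ - τ₁), u (τ₁ + t)) + (∫ t in (0:ℝ)..(T - τ₂), u (τ₂ + t))
      = (r * ((1 - c₁) * T + c₁ * τ₂ - (1 + d₁) * τ₁)
          - b₁ * ((r - c₂) * T + c₂ * τ₂ - (r + d₂) * τ₁)) / (r * (1 - b₁ * b₂)) := by
  have hu₂ : IntervalIntegrable u volume τ₁ τ₂ := ContinuousOn.intervalIntegrable_of_Icc h2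
    fun t ht => (hu2 t ht).continuousWithinAt
  have hu₃ : IntervalIntegrable u volume τ₂ T := ContinuousOn.intervalIntegrable_of_Icc h3
    fun t ht => (hu3 t ht).continuousWithinAt
  have hv₂ : IntervalIntegrable v volume τ₁ τ₂ := ContinuousOn.intervalIntegrable_of_Icc h2
    fun t ht => (hv2 t ht).continuousWithinAt
  have hv₃ : IntervalIntegrable v volume τ₂ T := ContinuousOn.intervalIntegrable_of_Icc h3
    fun t ht => (hv3 t ht).continuousWithinAt
  have identity_u := season_integrals_eq_of_periodic (α₂ := 1) (α₃ := 1 - c₁) (β := 1) (γ := b₁)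
    h1 h2 h3 hupos huper hu₂ hu₃ hv₂ hv₃ hu1
    (fun t ht => (hu2 t ht).congr_deriv (by ring)) (fun t ht => (hu3 t ht).congr_deriv (by ring))
  have identity_v := season_integrals_eq_of_periodic (α₂ := r) (α₃ := r - c₂) (β := r)
    (γ := r * b₂) h1 h2 h3 hvpos hvper hv₂ hv₃ hu₂ hu₃ hv1
    (fun t ht => (hv2 t ht).congr_deriv (by ring)) (fun t ht => (hv3 t ht).congr_deriv (by ring))
  have hdet : r * (1 - b₁ * b₂) ≠ 0 := mul_ne_zero hr.ne' (sub_ne_zero.mpr (Ne.symm hbb))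
  simp only [intervalIntegral.integral_comp_add_left, add_zero, add_sub_cancel]
  rw [eq_div_iff hdet]
  linear_combination r * identity_u - b₁ * identity_v

end SeasonalLotkaVolterra

theorem stmt_19_general (d₁ d₂ r b₁ b₂ c₁ c₂ τ₁ τ₂ T : ℝ)
    (hr : 0 < r) (hbb : b₁ * b₂ ≠ 1)
    (h1 : 0 < τ₁) (h2 : τ₁ < τ₂) (h3 : τ₂ < T)
    (u v u' v' : ℝ → ℝ)
    (hupos : ∀ t ∈ Icc (0:ℝ) T, 0 < u t) (hvpos : ∀ t ∈ Icc (0:ℝ) T, 0 < v t)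
    (huper : u T = u 0) (hvper : v T = v 0)
    (hu1 : ∀ t ∈ Icc (0:ℝ) τ₁, HasDerivWithinAt u (-d₁ * u t) (Icc (0:ℝ) τ₁) t)
    (hv1 : ∀ t ∈ Icc (0:ℝ) τ₁, HasDerivWithinAt v (-d₂ * v t) (Icc (0:ℝ) τ₁) t)
    (hu2 : ∀ t ∈ Icc τ₁ τ₂,
      HasDerivWithinAt u (u t * (1 - u t - b₁ * v t)) (Icc τ₁ τ₂) t)
    (hv2 : ∀ t ∈ Icc τ₁ τ₂,
      HasDerivWithinAt v (r * v t * (1 - v t - b₂ * u t)) (Icc τ₁ τ₂) t)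
    (hu3 : ∀ t ∈ Icc τ₂ T,
      HasDerivWithinAt u (u t * (1 - u t - b₁ * v t) - c₁ * u t) (Icc τ₂ T) t)
    (hv3 : ∀ t ∈ Icc τ₂ T,
      HasDerivWithinAt v (r * v t * (1 - v t - b₂ * u t) - c₂ * v t) (Icc τ₂ T) t)
    (hupos' : ∀ t ∈ Icc (0:ℝ) T, 0 < u' t) (hvpos' : ∀ t ∈ Icc (0:ℝ) T, 0 < v' t)
    (huper' : u' T = u' 0) (hvper' : v' T = v' 0)
    (hu1' : ∀ t ∈ Icc (0:ℝ) τ₁, HasDerivWithinAt u' (-d₁ * u' t) (Icc (0:ℝ) τ₁) t)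
    (hv1' : ∀ t ∈ Icc (0:ℝ) τ₁, HasDerivWithinAt v' (-d₂ * v' t) (Icc (0:ℝ) τ₁) t)
    (hu2' : ∀ t ∈ Icc τ₁ τ₂,
      HasDerivWithinAt u' (u' t * (1 - u' t - b₁ * v' t)) (Icc τ₁ τ₂) t)
    (hv2' : ∀ t ∈ Icc τ₁ τ₂,
      HasDerivWithinAt v' (r * v' t * (1 - v' t - b₂ * u' t)) (Icc τ₁ τ₂) t)
    (hu3' : ∀ t ∈ Icc τ₂ T,
      HasDerivWithinAt u' (u' t * (1 - u' t - b₁ * v' t) - c₁ * u' t) (Icc τ₂ T) t)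
    (hv3' : ∀ t ∈ Icc τ₂ T,
      HasDerivWithinAt v' (r * v' t * (1 - v' t - b₂ * u' t) - c₂ * v' t) (Icc τ₂ T) t) :
    (∫ t in (0:ℝ)..(τ₂ - τ₁), u (τ₁ + t)) + (∫ t in (0:ℝ)..(T - τ₂), u (τ₂ + t))
      = (r * ((1 - c₁) * T + c₁ * τ₂ - (1 + d₁) * τ₁)
          - b₁ * ((r - c₂) * T + c₂ * τ₂ - (r + d₂) * τ₁)) / (r * (1 - b₁ * b₂)) ∧
    (∫ t in (0:ℝ)..(τ₂ - τ₁), u' (τ₁ + t)) + (∫ t in (0:ℝ)..(T - τ₂), u' (τ₂ + t))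
      = (r * ((1 - c₁) * T + c₁ * τ₂ - (1 + d₁) * τ₁)
          - b₁ * ((r - c₂) * T + c₂ * τ₂ - (r + d₂) * τ₁)) / (r * (1 - b₁ * b₂)) := by
  exact ⟨integral_u_eq_of_periodic_solution hr hbb h1.le h2.le h3.le hupos hvpos huper hvper
      hu1 hv1 hu2 hv2 hu3 hv3,
    integral_u_eq_of_periodic_solution hr hbb h1.le h2.le h3.le hupos' hvpos' huper' hvper'
      hu1' hv1' hu2' hv2' hu3' hv3'⟩

/-- Uniqueness of the coexistence average: any two positive T-periodic solutions
(ū,v̄) and (ũ,ṽ) of the two-species seasonal system with b₁b₂ ≠ 1 have u-integrals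
over the growth and grazing seasons both equal to
[r((1-c₁)T + c₁τ₂ - (1+d₁)τ₁) - b₁((r-c₂)T + c₂τ₂ - (r+d₂)τ₁)] / (r(1-b₁b₂)). -/
theorem stmt_19 (d₁ d₂ r b₁ b₂ c₁ c₂ τ₁ τ₂ T : ℝ)
    (hd₁ : 0 < d₁) (hd₂ : 0 < d₂) (hr : 0 < r) (hb₁ : 0 < b₁) (hb₂ : 0 < b₂)
    (hc₁ : 0 < c₁) (hc₂ : 0 < c₂) (hbb : b₁ * b₂ ≠ 1)
    (h1 : 0 < τ₁) (h2 : τ₁ < τ₂) (h3 : τ₂ < T)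
    (u v u' v' : ℝ → ℝ)
    (hupos : ∀ t ∈ Icc (0:ℝ) T, 0 < u t) (hvpos : ∀ t ∈ Icc (0:ℝ) T, 0 < v t)
    (huper : u T = u 0) (hvper : v T = v 0)
    (hu1 : ∀ t ∈ Icc (0:ℝ) τ₁, HasDerivWithinAt u (-d₁ * u t) (Icc (0:ℝ) τ₁) t)
    (hv1 : ∀ t ∈ Icc (0:ℝ) τ₁, HasDerivWithinAt v (-d₂ * v t) (Icc (0:ℝ) τ₁) t)
    (hu2 : ∀ t ∈ Icc τ₁ τ₂,
      HasDerivWithinAt u (u t * (1 - u t - b₁ * v t)) (Icc τ₁ τ₂) t)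
    (hv2 : ∀ t ∈ Icc τ₁ τ₂,
      HasDerivWithinAt v (r * v t * (1 - v t - b₂ * u t)) (Icc τ₁ τ₂) t)
    (hu3 : ∀ t ∈ Icc τ₂ T,
      HasDerivWithinAt u (u t * (1 - u t - b₁ * v t) - c₁ * u t) (Icc τ₂ T) t)
    (hv3 : ∀ t ∈ Icc τ₂ T,
      HasDerivWithinAt v (r * v t * (1 - v t - b₂ * u t) - c₂ * v t) (Icc τ₂ T) t)
    (hupos' : ∀ t ∈ Icc (0:ℝ) T, 0 < u' t) (hvpos' : ∀ t ∈ Icc (0:ℝ) T, 0 < v' t)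
    (huper' : u' T = u' 0) (hvper' : v' T = v' 0)
    (hu1' : ∀ t ∈ Icc (0:ℝ) τ₁, HasDerivWithinAt u' (-d₁ * u' t) (Icc (0:ℝ) τ₁) t)
    (hv1' : ∀ t ∈ Icc (0:ℝ) τ₁, HasDerivWithinAt v' (-d₂ * v' t) (Icc (0:ℝ) τ₁) t)
    (hu2' : ∀ t ∈ Icc τ₁ τ₂,
      HasDerivWithinAt u' (u' t * (1 - u' t - b₁ * v' t)) (Icc τ₁ τ₂) t)
    (hv2' : ∀ t ∈ Icc τ₁ τ₂,
      HasDerivWithinAt v' (r * v' t * (1 - v' t - b₂ * u' t)) (Icc τ₁ τ₂) t)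
    (hu3' : ∀ t ∈ Icc τ₂ T,
      HasDerivWithinAt u' (u' t * (1 - u' t - b₁ * v' t) - c₁ * u' t) (Icc τ₂ T) t)
    (hv3' : ∀ t ∈ Icc τ₂ T,
      HasDerivWithinAt v' (r * v' t * (1 - v' t - b₂ * u' t) - c₂ * v' t) (Icc τ₂ T) t) :
    (∫ t in (0:ℝ)..(τ₂ - τ₁), u (τ₁ + t)) + (∫ t in (0:ℝ)..(T - τ₂), u (τ₂ + t))
      = (r * ((1 - c₁) * T + c₁ * τ₂ - (1 + d₁) * τ₁)
          - b₁ * ((r - c₂) * T + c₂ * τ₂ - (r + d₂) * τ₁)) / (r * (1 - b₁ * b₂)) ∧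
    (∫ t in (0:ℝ)..(τ₂ - τ₁), u' (τ₁ + t)) + (∫ t in (0:ℝ)..(T - τ₂), u' (τ₂ + t))
      = (r * ((1 - c₁) * T + c₁ * τ₂ - (1 + d₁) * τ₁)
          - b₁ * ((r - c₂) * T + c₂ * τ₂ - (r + d₂) * τ₁)) / (r * (1 - b₁ * b₂)) :=
  stmt_19_general d₁ d₂ r b₁ b₂ c₁ c₂ τ₁ τ₂ T hr hbb h1 h2 h3 u v u' v' hupos hvpos huper hvper hu1
    hv1 hu2 hv2 hu3 hv3 hupos' hvpos' huper' hvper' hu1' hv1' hu2' hv2' hu3' hv3'
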